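/- (Case 2B bound for the L-surface) Let 0 < α < 1 be irrational, T = T_α the L-surface interval exchange on [0,3), and y_1, ..., y_m a T-orbit segment. Under the hypotheses of Case 2B (there exist special intervals J_{k+16}(ℓ_3) ⊂ J_{k+8}(q^{++}) and three distinct residues r^(0), r^(1), r^(2) ∈ {0,1,2} such that the orbit points y_i with q_{k+1}+q_{k+9} ≤ i ≤ m−q_{k+1}−q_{k+9} avoid r^(j)+J_{k+16}(ℓ_3) for each j), we have m ≤ 2q_{k+1} + 2q_{k+9} + 2q_{k+17} + 6. -/

import Mathlib

/-!
Let `η = {s α}` and `ζ = 1 - {t α}` be the two gaps of the partition `A_{k+16}(α)` next to `0`.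
Both are realised by indices `1 ≤ s, t ≤ q_{k+17} - 2` (and not only by `q = -1`), because
`q_{k+17} - 2 ≥ q_4 - 2` is already at least `1/α` and `1/(1-α)`. Modulo `1`, `T` is the rotation
by `α`, and going back `s` steps or forward `t` steps moves a rotation orbit point down by `η`
resp. `ζ` (mod `1`); a minimum argument then shows that any `2 max(s, t) + 1` consecutive orbit
points meet `J_{k+16}(ℓ₃) = [{ℓ₃ α} - η, {ℓ₃ α} + ζ)`. So if `m` were larger than the bound, an
orbit point `y_i` of the middle range would lie in `⌊y_i⌋ + J_{k+16}(ℓ₃)`, and `⌊y_i⌋ ∈ {0, 1, 2}`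
is one of `r₀, r₁, r₂`.
-/

/-- `q_k`: the denominators of the continued fraction convergents of `α`. -/
noncomputable def cfq (α : ℝ) (k : ℕ) : ℝ := (GenContFract.of α).dens k

/-- `a_k`: the continued fraction digits (partial quotients) of `α`, for `k ≥ 1`. -/
noncomputable def cfa (α : ℝ) (k : ℕ) : ℝ :=
  ((GenContFract.of α).partDens.get? (k - 1)).getD 0

/-- `‖y‖`: the distance from `y` to the nearest integer. -/
noncomputable def nearestIntDist (y : ℝ) : ℝ := |y - round y|

/-- The interval exchange transformation T = T_α on [0,3) encoding the geodesic flow of slope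
1/α on the L-surface: each of the six pieces is a translation. -/
noncomputable def TL (α : ℝ) (x : ℝ) : ℝ :=
  if x < 1 - α then x + 2 + α
  else if x < 1 then x + α
  else if x < 2 - α then x + α
  else if x < 2 then x + α
  else if x < 3 - α then x + α - 2
  else x + α - 3

namespace Int

variable {a b : ℝ}

theorem fract_sub_of_fract_le (h : fract b ≤ fract a) : fract (a - b) = fract a - fract b :=
  fract_eq_iff.mpr ⟨by linarith, by linarith [fract_lt_one a, fract_nonneg b],
    ⌊a⌋ - ⌊b⌋, by push_cast; linarith [floor_add_fract a, floor_add_fract b]⟩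

theorem fract_add_of_one_le (h : 1 ≤ fract a + fract b) :
    fract (a + b) = fract a + fract b - 1 :=
  fract_eq_iff.mpr ⟨by linarith, by linarith [fract_lt_one a, fract_lt_one b],
    ⌊a⌋ + ⌊b⌋ + 1, by push_cast; linarith [floor_add_fract a, floor_add_fract b]⟩

theorem fract_mem_Ico_of_fract_sub_lt {c L : ℝ} (hc : 0 ≤ c) (hcL : c + L ≤ 1)
    (h : fract (a - c) < L) : fract a ∈ Set.Ico c (c + L) := by
  have ha := floor_add_fract a
  by_cases hca : c ≤ fract a
  · have : fract (a - c) = fract a - c :=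
      fract_eq_iff.mpr ⟨by linarith, by linarith [fract_lt_one a], ⌊a⌋, by linarith⟩
    exact ⟨hca, by linarith⟩
  · have : fract (a - c) = fract a - c + 1 :=
      fract_eq_iff.mpr ⟨by linarith [fract_nonneg a, fract_nonneg (a - c)], by linarith,
        ⌊a⌋ - 1, by push_cast; linarith⟩
    linarith [fract_nonneg a]

end Int

namespace GenContFract

variable {α : ℝ}

theorem dens_add_dens_le_of_irrational (hα : Irrational α) (n : ℕ) :
    (GenContFract.of α).dens n + (GenContFract.of α).dens (n + 1) ≤
      (GenContFract.of α).dens (n + 2) := by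
  have hnt : ¬(GenContFract.of α).TerminatedAt (n + 1) := fun h =>
    hα <| by obtain ⟨q, hq⟩ := (terminates_iff_rat α).mp ⟨n + 1, h⟩; exact ⟨q, hq.symm⟩
  obtain ⟨gp, hgp⟩ := Option.ne_none_iff_exists'.mp hnt
  have hb := of_one_le_get?_partDen (partDen_eq_s_b hgp)
  rw [dens_recurrence hgp rfl rfl, of_partNum_eq_one (partNum_eq_s_a hgp)]
  nlinarith [zero_le_of_den (v := α) (n := n + 1)]

theorem dens_one_of_mem_Ioo (h0 : 0 < α) (h1 : α < 1) :
    (GenContFract.of α).dens 1 = ⌊α⁻¹⌋ := by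
  have hfr : Int.fract α = α := Int.fract_eq_self.mpr ⟨h0.le, h1⟩
  have hs := of_s_head (v := α) (by rw [hfr]; exact h0.ne')
  rw [Stream'.Seq.head, hfr] at hs
  rw [first_den_eq hs]

theorem dens_two_of_mem_Ioo (h0 : 0 < α) (h1 : α < 1) (hβ : Int.fract α⁻¹ ≠ 0) :
    (GenContFract.of α).dens 2 = ⌊(Int.fract α⁻¹)⁻¹⌋ * ⌊α⁻¹⌋ + 1 := by
  have hs : (GenContFract.of α).s.get? 1 = some ⟨1, ⌊(Int.fract α⁻¹)⁻¹⌋⟩ := by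
    rw [of_s_succ, Int.fract_eq_self.mpr ⟨h0.le, h1⟩]
    exact of_s_head hβ
  rw [dens_recurrence hs zeroth_den_eq_one (dens_one_of_mem_Ioo h0 h1)]
  ring

theorem inv_le_dens_one_add_one (h0 : 0 < α) (h1 : α < 1) :
    α⁻¹ ≤ (GenContFract.of α).dens 1 + 1 := by
  rw [dens_one_of_mem_Ioo h0 h1]
  exact (Int.lt_floor_add_one _).le

theorem inv_one_sub_le_dens_two_add_one (h0 : 0 < α) (h1 : α < 1) :
    (1 - α)⁻¹ ≤ (GenContFract.of α).dens 2 + 1 := by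
  have hd2 : 1 ≤ (GenContFract.of α).dens 2 :=
    zeroth_den_eq_one (g := GenContFract.of α) ▸ of_den_mono.trans of_den_mono
  rcases le_or_gt α (1 / 2) with hα | hα
  · calc (1 - α)⁻¹ ≤ 2 := by rw [inv_le_comm₀ (by linarith) two_pos]; linarith
      _ ≤ _ := by linarith
  -- for `α > 1/2` the first partial quotient is `1`, and `(1 - α)⁻¹ = 1 + β⁻¹` with `β = α⁻¹ - 1`
  have hfloor : ⌊α⁻¹⌋ = 1 := by
    rw [Int.floor_eq_iff]
    constructor
    · push_cast; exact (one_le_inv₀ h0).mpr h1.le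
    · rw [inv_lt_comm₀ h0 (by norm_num)]; push_cast; linarith
  have hβ : Int.fract α⁻¹ = α⁻¹ - 1 := by rw [Int.fract, hfloor]; norm_num
  have hβpos : 0 < α⁻¹ - 1 := by linarith [(one_lt_inv₀ h0).mpr h1]
  rw [dens_two_of_mem_Ioo h0 h1 (by rw [hβ]; exact hβpos.ne'), hfloor, hβ]
  have key : (1 - α)⁻¹ = 1 + (α⁻¹ - 1)⁻¹ := by
    have : 1 - α ≠ 0 := by linarith
    field_simp
    ring
  rw [key]
  push_cast
  linarith [Int.lt_floor_add_one (α⁻¹ - 1)⁻¹]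

theorem max_inv_inv_one_sub_le_dens_sub_two (hα : Irrational α) (h0 : 0 < α) (h1 : α < 1)
    {n : ℕ} (hn : 4 ≤ n) : max α⁻¹ (1 - α)⁻¹ ≤ (GenContFract.of α).dens n - 2 := by
  set d := (GenContFract.of α).dens
  have hmono : Monotone d := monotone_nat_of_le_succ fun _ => of_den_mono
  have hd0 : d 0 = 1 := zeroth_den_eq_one
  have h012 : d 0 + d 1 ≤ d 2 := dens_add_dens_le_of_irrational hα 0
  have h123 : d 1 + d 2 ≤ d 3 := dens_add_dens_le_of_irrational hα 1
  have h234 : d 2 + d 3 ≤ d 4 := dens_add_dens_le_of_irrational hα 2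
  have h01 := hmono zero_le_one
  have h4n := hmono hn
  have := inv_le_dens_one_add_one h0 h1
  have := inv_one_sub_le_dens_two_add_one h0 h1
  exact max_le (by linarith) (by linarith)

end GenContFract

section Rotation

variable {α : ℝ}

theorem exists_one_sub_le_fract_mul (h0 : 0 < α) (h1 : α < 1) {B : ℝ} (hB : α⁻¹ ≤ B) :
    ∃ p : ℕ, 1 ≤ p ∧ (p : ℝ) ≤ B ∧ 1 - α ≤ Int.fract (p * α) := by
  -- `p = ⌈α⁻¹⌉ - 1` is the largest `p` with `p α < 1`
  set p := ⌈α⁻¹⌉₊ - 1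
  have hceil : 2 ≤ ⌈α⁻¹⌉₊ := Nat.lt_ceil.mpr (by exact_mod_cast (one_lt_inv₀ h0).mpr h1)
  have hp : (p : ℝ) + 1 = ⌈α⁻¹⌉₊ := by
    push_cast [p, Nat.cast_sub (by omega : 1 ≤ ⌈α⁻¹⌉₊)]; ring
  have hlt : (p : ℝ) < α⁻¹ := by linarith [Nat.ceil_lt_add_one (by positivity : 0 ≤ α⁻¹)]
  have hle : α⁻¹ ≤ p + 1 := hp ▸ Nat.le_ceil _
  have hpα : p * α < 1 := by simpa [h0.ne'] using mul_lt_mul_of_pos_right hlt h0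
  have hpα' : 1 ≤ (p + 1) * α := by simpa [h0.ne'] using mul_le_mul_of_nonneg_right hle h0.le
  refine ⟨p, by omega, by linarith, ?_⟩
  rw [Int.fract_eq_self.mpr ⟨by positivity, hpα⟩]
  linarith

theorem exists_fract_mul_le_one_sub (h0 : 0 < α) (h1 : α < 1) {B : ℝ} (hB : (1 - α)⁻¹ ≤ B) :
    ∃ p : ℕ, 1 ≤ p ∧ (p : ℝ) ≤ B ∧ Int.fract (p * α) ≤ 1 - α := by
  obtain ⟨p, hp1, hpB, hp⟩ :=
    exists_one_sub_le_fract_mul (α := 1 - α) (by linarith) (by linarith) hB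
  refine ⟨p, hp1, hpB, ?_⟩
  by_cases hfr : Int.fract (p * α) = 0
  · rw [hfr]; linarith
  -- `p (1 - α) ≡ -p α (mod 1)`
  rw [show (p : ℝ) * (1 - α) = -(p * α) + (p : ℤ) by push_cast; ring, Int.fract_add_intCast,
    Int.fract_neg hfr] at hp
  linarith

theorem exists_pos_nat_eq_of_isLeast {f : ℤ → ℝ} {B d : ℝ}
    (hd : IsLeast {x | ∃ q : ℤ, -1 ≤ q ∧ (q : ℝ) ≤ B ∧ q ≠ 0 ∧ f q = x} d)
    (hp : ∃ p : ℕ, 1 ≤ p ∧ (p : ℝ) ≤ B ∧ f p ≤ f (-1)) :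
    ∃ p : ℕ, 1 ≤ p ∧ (p : ℝ) ≤ B ∧ f p = d := by
  obtain ⟨q, hq1, hqB, hq0, rfl⟩ := hd.1
  obtain ⟨p, hp1, hpB, hpf⟩ := hp
  rcases (by omega : q = -1 ∨ 1 ≤ q) with rfl | hq
  · exact ⟨p, hp1, hpB, le_antisymm hpf (hd.2 ⟨p, by omega, by exact_mod_cast hpB, by omega, rfl⟩)⟩
  · lift q to ℕ using (by omega)
    exact ⟨q, by omega, by exact_mod_cast hqB, rfl⟩

theorem fract_neg_of_mem_Ioo (h0 : 0 < α) (h1 : α < 1) : Int.fract (-α) = 1 - α := by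
  have hfr : Int.fract α = α := Int.fract_eq_self.mpr ⟨h0.le, h1⟩
  rw [Int.fract_neg (by rw [hfr]; exact h0.ne'), hfr]

theorem exists_nat_fract_mul_eq_of_isLeast (h0 : 0 < α) (h1 : α < 1) {B d : ℝ}
    (hB : (1 - α)⁻¹ ≤ B)
    (hd : IsLeast {x | ∃ q : ℤ, -1 ≤ q ∧ (q : ℝ) ≤ B ∧ q ≠ 0 ∧ Int.fract (q * α) = x} d) :
    ∃ p : ℕ, 1 ≤ p ∧ (p : ℝ) ≤ B ∧ Int.fract (p * α) = d := by
  obtain ⟨p, hp1, hpB, hp⟩ := exists_fract_mul_le_one_sub h0 h1 hB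
  simpa using exists_pos_nat_eq_of_isLeast hd
    ⟨p, hp1, hpB, by simpa [fract_neg_of_mem_Ioo h0 h1] using hp⟩

theorem exists_nat_one_sub_fract_mul_eq_of_isLeast (h0 : 0 < α) (h1 : α < 1) {B d : ℝ}
    (hB : α⁻¹ ≤ B)
    (hd : IsLeast {x | ∃ q : ℤ, -1 ≤ q ∧ (q : ℝ) ≤ B ∧ q ≠ 0 ∧ 1 - Int.fract (q * α) = x} d) :
    ∃ p : ℕ, 1 ≤ p ∧ (p : ℝ) ≤ B ∧ 1 - Int.fract (p * α) = d := by
  obtain ⟨p, hp1, hpB, hp⟩ := exists_one_sub_le_fract_mul h0 h1 hB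
  simpa using exists_pos_nat_eq_of_isLeast hd
    ⟨p, hp1, hpB, by simp [fract_neg_of_mem_Ioo h0 h1]; linarith⟩

end Rotation

theorem exists_lt_add_of_descending_steps (x : ℕ → ℝ) {s t M : ℕ} {η ζ : ℝ}
    (hη : 0 < η) (hζ : 0 < ζ) (hsM : s ≤ M) (htM : t ≤ M)
    (hdown : ∀ u, s ≤ u → η ≤ x u → x (u - s) = x u - η)
    (hup : ∀ u, ζ ≤ x u → x (u + t) = x u - ζ) :
    ∃ q ≤ 2 * M, x q < η + ζ := by
  -- a minimiser `b` of `x` on `[0, M]` has `b < s` and `M < b + t`, so `b + t - s ∈ [0, M]`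
  by_contra! hbig
  obtain ⟨b, hb, hmin⟩ := Finset.exists_min_image (Finset.range (M + 1)) x ⟨0, by simp⟩
  rw [Finset.mem_range] at hb
  have hxb := hbig b (by omega)
  have hbs : b < s := by
    by_contra! hsb
    have := hmin (b - s) (Finset.mem_range.mpr (by omega))
    linarith [hdown b hsb (by linarith)]
  have hxbt := hup b (by linarith)
  have hbt : M < b + t := by
    by_contra! hbt
    linarith [hmin (b + t) (Finset.mem_range.mpr (by omega))]
  have := hmin (b + t - s) (Finset.mem_range.mpr (by omega))
  linarith [hdown (b + t) (by omega) (by linarith)]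

theorem exists_fract_add_mul_mem_Ico {α z c η ζ : ℝ} {s t M : ℕ} (hη : 0 < η) (hζ : 0 < ζ)
    (hηc : η ≤ c) (hcζ : c + ζ ≤ 1) (hs : Int.fract (s * α) = η)
    (ht : Int.fract (t * α) = 1 - ζ) (hsM : s ≤ M) (htM : t ≤ M) :
    ∃ q ≤ 2 * M, Int.fract (z + q * α) ∈ Set.Ico (c - η) (c + ζ) := by
  set x : ℕ → ℝ := fun u => Int.fract (z + u * α - (c - η))
  obtain ⟨q, hq, hxq⟩ : ∃ q ≤ 2 * M, x q < η + ζ := by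
    refine exists_lt_add_of_descending_steps x hη hζ hsM htM (fun u hsu hxu => ?_)
      (fun u hxu => ?_)
    · have : z + ↑(u - s) * α - (c - η) = (z + u * α - (c - η)) - s * α := by
        push_cast [Nat.cast_sub hsu]; ring
      simp only [x, this]
      rw [Int.fract_sub_of_fract_le (by rwa [hs]), hs]
    · have : z + ↑(u + t) * α - (c - η) = (z + u * α - (c - η)) + t * α := by
        push_cast; ring
      simp only [x, this]
      rw [Int.fract_add_of_one_le (by rw [ht]; linarith), ht]
      ring
  refine ⟨q, hq, ?_⟩
  have := Int.fract_mem_Ico_of_fract_sub_lt (c := c - η) (L := η + ζ) (by linarith)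
    (by linarith) (by simpa [x] using hxq)
  rwa [show c - η + (η + ζ) = c + ζ by ring] at this

theorem exists_int_TL_eq (α x : ℝ) : ∃ z : ℤ, TL α x = x + α + z := by
  unfold TL
  split_ifs
  exacts [⟨2, by push_cast; ring⟩, ⟨0, by simp⟩, ⟨0, by simp⟩, ⟨0, by simp⟩,
    ⟨-2, by push_cast; ring⟩, ⟨-3, by push_cast; ring⟩]

theorem fract_orbit_eq {α : ℝ} {y : ℕ → ℝ} {m i : ℕ} (hi : 1 ≤ i)
    (horb : ∀ i, 1 ≤ i → i + 1 ≤ m → TL α (y i) = y (i + 1)) {j : ℕ} (hj : i + j ≤ m) :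
    Int.fract (y (i + j)) = Int.fract (y i + j * α) := by
  suffices ∃ z : ℤ, y (i + j) = y i + j * α + z by
    obtain ⟨z, hz⟩ := this
    rw [hz, Int.fract_add_intCast]
  induction j with
  | zero => exact ⟨0, by simp⟩
  | succ j ih =>
    obtain ⟨z, hz⟩ := ih (by omega)
    obtain ⟨z', hz'⟩ := exists_int_TL_eq α (y (i + j))
    refine ⟨z + z', ?_⟩
    rw [← add_assoc, ← horb _ (by omega) (by omega), hz', hz]
    push_cast
    ring

theorem exists_orbit_fract_mem_Ico {α c η ζ : ℝ} {y : ℕ → ℝ} {s t M i m : ℕ}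
    (horb : ∀ i, 1 ≤ i → i + 1 ≤ m → TL α (y i) = y (i + 1)) (hi : 1 ≤ i) (him : i + 2 * M ≤ m)
    (hη : 0 < η) (hζ : 0 < ζ) (hηc : η ≤ c) (hcζ : c + ζ ≤ 1) (hs : Int.fract (s * α) = η)
    (ht : Int.fract (t * α) = 1 - ζ) (hsM : s ≤ M) (htM : t ≤ M) :
    ∃ j ≤ 2 * M, Int.fract (y (i + j)) ∈ Set.Ico (c - η) (c + ζ) := by
  obtain ⟨j, hj, hmem⟩ := exists_fract_add_mul_mem_Ico (z := y i) hη hζ hηc hcζ hs ht hsM htM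
  exact ⟨j, hj, (fract_orbit_eq hi horb (j := j) (by omega)).symm ▸ hmem⟩

theorem Set.triple_eq_of_subset_triple {X : Type*} {a b c x y z : X}
    (h : ({a, b, c} : Set X) ⊆ {x, y, z}) (hab : a ≠ b) (hac : a ≠ c) (hbc : b ≠ c) :
    ({a, b, c} : Set X) = {x, y, z} := by
  refine Set.eq_of_subset_of_ncard_le h ?_ (Set.toFinite _)
  rw [Set.ncard_eq_three.mpr ⟨a, b, c, hab, hac, hbc, rfl⟩]
  calc ({x, y, z} : Set X).ncard ≤ ({y, z} : Set X).ncard + 1 := Set.ncard_insert_le _ _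
    _ ≤ ({z} : Set X).ncard + 1 + 1 := by gcongr; exact Set.ncard_insert_le _ _
    _ = 3 := by rw [Set.ncard_singleton]

theorem exists_mem_Ico_add_of_fract_mem {x a b : ℝ} (hx : x ∈ Set.Ico (0 : ℝ) 3)
    (h : Int.fract x ∈ Set.Ico a b) : ∃ r ∈ ({0, 1, 2} : Set ℝ), x ∈ Set.Ico (r + a) (r + b) := by
  have h0 : 0 ≤ ⌊x⌋ := Int.floor_nonneg.mpr hx.1
  have h3 : ⌊x⌋ < 3 := Int.floor_lt.mpr (by exact_mod_cast hx.2)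
  refine ⟨⌊x⌋, ?_, ?_⟩
  · rcases (by omega : ⌊x⌋ = 0 ∨ ⌊x⌋ = 1 ∨ ⌊x⌋ = 2) with h | h | h <;> simp [h]
  · have := Int.floor_add_fract x
    constructor <;> linarith [h.1, h.2]

theorem stmt16_general (α : ℝ) (hα : Irrational α) (h0 : 0 < α) (h1 : α < 1)
    (k : ℕ) (dst16 dss16 : ℝ)
    (hdss16 : IsLeast {x : ℝ | ∃ q : ℤ, -1 ≤ q ∧ (q : ℝ) ≤ cfq α (k + 17) - 2 ∧ q ≠ 0 ∧
      Int.fract ((q : ℝ) * α) = x} dss16)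
    (hdst16 : IsLeast {x : ℝ | ∃ q : ℤ, -1 ≤ q ∧ (q : ℝ) ≤ cfq α (k + 17) - 2 ∧ q ≠ 0 ∧
      1 - Int.fract ((q : ℝ) * α) = x} dst16)
    (m : ℕ) (y : ℕ → ℝ)
    (hy : ∀ i, 1 ≤ i → i ≤ m → y i ∈ Set.Ico (0 : ℝ) 3)
    (horb : ∀ i, 1 ≤ i → i + 1 ≤ m → TL α (y i) = y (i + 1))
    (ℓ3 : ℤ) (hℓ1 : 1 ≤ ℓ3) (hℓ2 : (ℓ3 : ℝ) ≤ cfq α (k + 17) - 2)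
    (r0 r1 r2 : ℝ) (hr : ({r0, r1, r2} : Set ℝ) ⊆ {0, 1, 2})
    (hdist : r0 ≠ r1 ∧ r0 ≠ r2 ∧ r1 ≠ r2)
    (hfree : ∀ i : ℕ, cfq α (k + 1) + cfq α (k + 9) ≤ (i : ℝ) →
      (i : ℝ) ≤ (m : ℝ) - cfq α (k + 1) - cfq α (k + 9) →
      ∀ r ∈ ({r0, r1, r2} : Set ℝ),
        y i ∉ Set.Ico (r + Int.fract ((ℓ3 : ℝ) * α) - dss16)
          (r + Int.fract ((ℓ3 : ℝ) * α) + dst16)) :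
    (m : ℝ) ≤ 2 * cfq α (k + 1) + 2 * cfq α (k + 9) + 2 * cfq α (k + 17) + 6 := by
  by_contra! hm
  obtain ⟨hQα, hQα'⟩ :=
    max_le_iff.mp (GenContFract.max_inv_inv_one_sub_le_dens_sub_two hα h0 h1 (n := k + 17)
      (by omega))
  obtain ⟨s, hs1, hsQ, hsη⟩ := exists_nat_fract_mul_eq_of_isLeast h0 h1 hQα' hdss16
  obtain ⟨t, -, htQ, htζ⟩ := exists_nat_one_sub_fract_mul_eq_of_isLeast h0 h1 hQα hdst16
  have hη : 0 < dss16 := hsη ▸ Int.fract_pos.mpr ((hα.natCast_mul (by omega)).ne_int _)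
  have hζ : 0 < dst16 := htζ ▸ sub_pos.mpr (Int.fract_lt_one _)
  have hηc := hdss16.2 ⟨ℓ3, by omega, hℓ2, by omega, rfl⟩
  have hcζ := hdst16.2 ⟨ℓ3, by omega, hℓ2, by omega, rfl⟩
  have hq : 0 ≤ cfq α (k + 1) + cfq α (k + 9) :=
    add_nonneg GenContFract.zero_le_of_den GenContFract.zero_le_of_den
  set i := ⌈cfq α (k + 1) + cfq α (k + 9)⌉₊ + 1
  set M := max s t
  have hiR : (i : ℝ) < cfq α (k + 1) + cfq α (k + 9) + 2 := by
    push_cast [i]; linarith [Nat.ceil_lt_add_one hq]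
  have hMR : (M : ℝ) ≤ cfq α (k + 17) - 2 := by push_cast [M]; exact max_le hsQ htQ
  have him : i + 2 * M ≤ m := by exact_mod_cast (by push_cast; linarith : ((i + 2 * M : ℕ) : ℝ) ≤ m)
  obtain ⟨j, hj, hmem⟩ := exists_orbit_fract_mem_Ico horb (by omega) him hη hζ hηc (by linarith)
    hsη (by linarith) (le_max_left s t) (le_max_right s t)
  obtain ⟨r, hr012, hyr⟩ := exists_mem_Ico_add_of_fract_mem (hy _ (by omega) (by omega)) hmem
  have hjR : (j : ℝ) ≤ 2 * M := by exact_mod_cast hj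
  refine hfree (i + j) ?_ ?_ r ?_ (by simpa only [add_sub_assoc, add_assoc] using hyr)
  · push_cast [i]; linarith [Nat.le_ceil (cfq α (k + 1) + cfq α (k + 9)), j.cast_nonneg (α := ℝ)]
  · push_cast; linarith
  · rwa [Set.triple_eq_of_subset_triple hr hdist.1 hdist.2.1 hdist.2.2]

/-- Case 2B bound for the L-surface: if there are a special interval J_{k+16}(ℓ₃) contained in
a special interval J_{k+8}(q⁺⁺), and three distinct residues r₀, r₁, r₂ ∈ {0,1,2} such that the
orbit points y_i with q_{k+1}+q_{k+9} ≤ i ≤ m−q_{k+1}−q_{k+9} avoid each rⱼ + J_{k+16}(ℓ₃),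
then m ≤ 2q_{k+1} + 2q_{k+9} + 2q_{k+17} + 6.  The gaps of the partitions A_{k+8}(α) and
A_{k+16}(α) are characterized as least elements. -/
theorem stmt16 (α : ℝ) (hα : Irrational α) (h0 : 0 < α) (h1 : α < 1)
    (k : ℕ) (hk : 1 ≤ k) (dst8 dss8 dst16 dss16 : ℝ)
    (hdss8 : IsLeast {x : ℝ | ∃ q : ℤ, -1 ≤ q ∧ (q : ℝ) ≤ cfq α (k + 9) - 2 ∧ q ≠ 0 ∧
      Int.fract ((q : ℝ) * α) = x} dss8)
    (hdst8 : IsLeast {x : ℝ | ∃ q : ℤ, -1 ≤ q ∧ (q : ℝ) ≤ cfq α (k + 9) - 2 ∧ q ≠ 0 ∧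
      1 - Int.fract ((q : ℝ) * α) = x} dst8)
    (hdss16 : IsLeast {x : ℝ | ∃ q : ℤ, -1 ≤ q ∧ (q : ℝ) ≤ cfq α (k + 17) - 2 ∧ q ≠ 0 ∧
      Int.fract ((q : ℝ) * α) = x} dss16)
    (hdst16 : IsLeast {x : ℝ | ∃ q : ℤ, -1 ≤ q ∧ (q : ℝ) ≤ cfq α (k + 17) - 2 ∧ q ≠ 0 ∧
      1 - Int.fract ((q : ℝ) * α) = x} dst16)
    (m : ℕ) (y : ℕ → ℝ)
    (hy : ∀ i, 1 ≤ i → i ≤ m → y i ∈ Set.Ico (0 : ℝ) 3)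
    (horb : ∀ i, 1 ≤ i → i + 1 ≤ m → TL α (y i) = y (i + 1))
    (ℓ3 qpp : ℤ) (hℓ1 : 1 ≤ ℓ3) (hℓ2 : (ℓ3 : ℝ) ≤ cfq α (k + 17) - 2)
    (hqpp1 : 1 ≤ qpp) (hqpp2 : (qpp : ℝ) ≤ cfq α (k + 9) - 2)
    (hsub : Set.Ico (Int.fract ((ℓ3 : ℝ) * α) - dss16) (Int.fract ((ℓ3 : ℝ) * α) + dst16) ⊆
      Set.Ico (Int.fract ((qpp : ℝ) * α) - dss8) (Int.fract ((qpp : ℝ) * α) + dst8))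
    (r0 r1 r2 : ℝ) (hr : ({r0, r1, r2} : Set ℝ) ⊆ {0, 1, 2})
    (hdist : r0 ≠ r1 ∧ r0 ≠ r2 ∧ r1 ≠ r2)
    (hfree : ∀ i : ℕ, cfq α (k + 1) + cfq α (k + 9) ≤ (i : ℝ) →
      (i : ℝ) ≤ (m : ℝ) - cfq α (k + 1) - cfq α (k + 9) →
      ∀ r ∈ ({r0, r1, r2} : Set ℝ),
        y i ∉ Set.Ico (r + Int.fract ((ℓ3 : ℝ) * α) - dss16)
          (r + Int.fract ((ℓ3 : ℝ) * α) + dst16)) :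
    (m : ℝ) ≤ 2 * cfq α (k + 1) + 2 * cfq α (k + 9) + 2 * cfq α (k + 17) + 6 :=
  stmt16_general α hα h0 h1 k dst16 dss16 hdss16 hdst16 m y hy horb ℓ3 hℓ1 hℓ2 r0 r1 r2 hr hdist
    hfree
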